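/- Let ε ≤ 1/3, let G admit an (ε,η)-almost-clique decomposition V = V_sparse ∪ C_1 ∪ ... ∪ C_k, and let v ∈ C_i. Then the local sparsity of v satisfies ζ_v ≥ (1−3ε)·a(v)/2, where a(v) = |C_i ∖ (N(v) ∪ {v})| is the number of vertices of C_i other than v that are not adjacent to v. -/

import Mathlib

open Finset

variable {V : Type*} [Fintype V] [DecidableEq V]

/-- Nodes `u, v` are `ε`-similar if `|N(u) ∩ N(v)| ≥ (1−ε)Δ`, where `Δ` is the
maximum degree of `G`. -/
abbrev NodeSimilar (G : SimpleGraph V) [DecidableRel G.Adj] (ε : ℝ) (u v : V) : Prop :=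
  (1 - ε) * (G.maxDegree : ℝ) ≤ ((G.neighborFinset u ∩ G.neighborFinset v).card : ℝ)

/-- Nodes `u, v` are `ε`-friends if they are `ε`-similar and adjacent. -/
abbrev Friends (G : SimpleGraph V) [DecidableRel G.Adj] (ε : ℝ) (u v : V) : Prop :=
  NodeSimilar G ε u v ∧ G.Adj u v

/-- A node is `ε`-dense if it has at least `(1−ε)Δ` `ε`-friends. -/
def IsDense (G : SimpleGraph V) [DecidableRel G.Adj] (ε : ℝ) (v : V) : Prop :=
  (1 - ε) * (G.maxDegree : ℝ) ≤ ((univ.filter (fun w => Friends G ε v w)).card : ℝ)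

/-- An `(ε,η)`-almost-clique decomposition of `G`: a partition
`V = V_sparse ∪ C 0 ∪ ... ∪ C (k-1)` such that `V_sparse` contains no `η`-dense node,
`(1−ε)Δ ≤ |C i| ≤ (1+ε)Δ`, and every `v ∈ C i` has at least `(1−ε)Δ` neighbors in `C i`. -/
structure IsACD (G : SimpleGraph V) [DecidableRel G.Adj] (ε η : ℝ) {k : ℕ}
    (Vsp : Finset V) (C : Fin k → Finset V) : Prop where
  cover : ∀ v : V, v ∈ Vsp ∨ ∃ i, v ∈ C i
  disjoint_sparse : ∀ i, Disjoint Vsp (C i)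
  disjoint_cliques : ∀ i j, i ≠ j → Disjoint (C i) (C j)
  sparse_not_dense : ∀ v ∈ Vsp, ¬ IsDense G η v
  card_lower : ∀ i, (1 - ε) * (G.maxDegree : ℝ) ≤ ((C i).card : ℝ)
  card_upper : ∀ i, ((C i).card : ℝ) ≤ (1 + ε) * (G.maxDegree : ℝ)
  nbr_lower : ∀ i, ∀ v ∈ C i, (1 - ε) * (G.maxDegree : ℝ) ≤ ((G.neighborFinset v ∩ C i).card : ℝ)

/-- `m(X)`: the number of edges of `G` with both endpoints in `X`
(ordered adjacent pairs, halved). -/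
def edgesIn (G : SimpleGraph V) [DecidableRel G.Adj] (X : Finset V) : ℕ :=
  ((X ×ˢ X).filter (fun p : V × V => G.Adj p.1 p.2)).card / 2

/-- The local sparsity `ζ_v = (1/Δ)·(Δ(Δ−1)/2 − m(N(v)))`. -/
noncomputable def sparsity (G : SimpleGraph V) [DecidableRel G.Adj] (v : V) : ℝ :=
  (1 / (G.maxDegree : ℝ)) *
    ((G.maxDegree : ℝ) * ((G.maxDegree : ℝ) - 1) / 2 - (edgesIn G (G.neighborFinset v) : ℝ))

/-!
Two vertices `u, v` of an almost-clique `C` are `3ε`-similar: `u` has at least `(1-ε)Δ`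
neighbours in `C`, and at most `2εΔ` vertices of `C` lie outside `N(v)`. So every vertex of
`A = C ∖ (N(v) ∪ {v})` sends at least `(1-3ε)Δ` edges into `N(v)`. Conversely, every
`w ∈ N(v)` also has the neighbour `v ∉ N(v) ∪ A`, so its degree inside `N(v)` is at most
`Δ - 1 - |N(w) ∩ A|`. Summing over `w` gives `2 m(N(v)) + e(A, N(v)) ≤ Δ(Δ-1)`, and dividing
by `2Δ` yields `ζ_v ≥ e(A, N(v)) / 2Δ ≥ (1-3ε)|A|/2`.
-/

lemma Finset.card_inter_le_card_inter_add_card_sdiff {α : Type*} [DecidableEq α]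
    (X C N : Finset α) :
    (X ∩ C).card ≤ (X ∩ N).card + (C \ N).card :=
  (card_le_card fun x hx => by
    simp only [mem_union, mem_inter, mem_sdiff] at hx ⊢
    tauto).trans (card_union_le _ _)

namespace SimpleGraph

variable (G : SimpleGraph V) [DecidableRel G.Adj]

lemma neighborFinset_inter_eq_filter (u : V) (t : Finset V) :
    G.neighborFinset u ∩ t = t.filter (G.Adj u) := by
  ext w
  simp [and_comm]

lemma card_filter_adj_product (s t : Finset V) :
    ((s ×ˢ t).filter (fun p : V × V => G.Adj p.1 p.2)).card
      = ∑ u ∈ s, (G.neighborFinset u ∩ t).card := by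
  rw [card_filter, sum_product]
  simp_rw [neighborFinset_inter_eq_filter, card_filter]

lemma sum_card_neighborFinset_inter_comm (s t : Finset V) :
    ∑ u ∈ s, (G.neighborFinset u ∩ t).card
      = ∑ w ∈ t, (G.neighborFinset w ∩ s).card := by
  simp_rw [neighborFinset_inter_eq_filter, card_filter]
  rw [sum_comm]
  exact sum_congr rfl fun _ _ => sum_congr rfl fun _ _ => if_congr (G.adj_comm _ _) rfl rfl

lemma card_inter_add_card_inter_lt_degree {v w : V} (hwv : G.Adj w v) {s t : Finset V}
    (hst : Disjoint s t) (hs : v ∉ s) (ht : v ∉ t) :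
    (G.neighborFinset w ∩ s).card + (G.neighborFinset w ∩ t).card < G.degree w := by
  rw [← card_union_of_disjoint (hst.mono inter_subset_right inter_subset_right),
    ← inter_union_distrib_left, ← card_neighborFinset_eq_degree]
  exact card_lt_card <| (ssubset_iff_of_subset inter_subset_left).2
    ⟨v, (G.mem_neighborFinset w v).2 hwv, by simp [hs, ht]⟩

lemma two_mul_edgesIn_neighborFinset_add_sum_le {v : V} {s : Finset V}
    (hs : Disjoint s (insert v (G.neighborFinset v))) :
    2 * edgesIn G (G.neighborFinset v)
        + ∑ u ∈ s, (G.neighborFinset u ∩ G.neighborFinset v).card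
      ≤ G.maxDegree * (G.maxDegree - 1) := by
  set N := G.neighborFinset v
  have h2m : 2 * edgesIn G N ≤ ∑ w ∈ N, (G.neighborFinset w ∩ N).card := by
    rw [edgesIn, card_filter_adj_product]
    exact Nat.mul_div_le _ _
  have hw : ∀ w ∈ N, (G.neighborFinset w ∩ N).card + (G.neighborFinset w ∩ s).card
      ≤ G.maxDegree - 1 := fun w hw =>
    Nat.le_sub_one_of_lt <| (G.card_inter_add_card_inter_lt_degree
      ((G.mem_neighborFinset v w).1 hw).symm (disjoint_of_subset_right (subset_insert v N) hs).symm
      (G.notMem_neighborFinset_self v) (disjoint_right.1 hs (mem_insert_self v N))).trans_le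
      (G.degree_le_maxDegree w)
  calc 2 * edgesIn G N + ∑ u ∈ s, (G.neighborFinset u ∩ N).card
      ≤ ∑ w ∈ N, ((G.neighborFinset w ∩ N).card + (G.neighborFinset w ∩ s).card) := by
        rw [sum_add_distrib, sum_card_neighborFinset_inter_comm]
        omega
    _ ≤ ∑ _w ∈ N, (G.maxDegree - 1) := sum_le_sum hw
    _ ≤ G.maxDegree * (G.maxDegree - 1) := by
        rw [sum_const, card_neighborFinset_eq_degree, smul_eq_mul]
        exact Nat.mul_le_mul_right _ (G.degree_le_maxDegree v)

lemma sum_card_inter_neighborFinset_div_le_sparsity {v : V} {s : Finset V}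
    (hs : Disjoint s (insert v (G.neighborFinset v))) :
    (∑ u ∈ s, (G.neighborFinset u ∩ G.neighborFinset v).card : ℝ) / (2 * G.maxDegree)
      ≤ sparsity G v := by
  have hcast : ((G.maxDegree * (G.maxDegree - 1) : ℕ) : ℝ)
      = G.maxDegree * (G.maxDegree - 1) := by
    rcases Nat.eq_zero_or_pos G.maxDegree with h0 | hpos
    · simp [h0]
    · rw [Nat.cast_mul, Nat.cast_sub hpos, Nat.cast_one]
  have key := G.two_mul_edgesIn_neighborFinset_add_sum_le hs
  rw [← Nat.cast_le (α := ℝ), hcast] at key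
  push_cast at key
  rw [sparsity, show ∀ e : ℝ, e / (2 * G.maxDegree) = 1 / G.maxDegree * (e / 2) by
    intro e; ring]
  gcongr
  linarith

end SimpleGraph

section

variable {G : SimpleGraph V} [DecidableRel G.Adj] {ε η : ℝ} {k : ℕ} {Vsp : Finset V}
  {C : Fin k → Finset V} {i : Fin k}

lemma IsACD.nodeSimilar (h : IsACD G ε η Vsp C) {u v : V} (hu : u ∈ C i) (hv : v ∈ C i) :
    NodeSimilar G (3 * ε) u v := by
  have hsplit : ((C i \ G.neighborFinset v).card : ℝ) + (G.neighborFinset v ∩ C i).card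
      = (C i).card := by
    rw [inter_comm]
    exact_mod_cast card_sdiff_add_card_inter _ _
  have hu' : ((G.neighborFinset u ∩ C i).card : ℝ)
      ≤ (G.neighborFinset u ∩ G.neighborFinset v).card + (C i \ G.neighborFinset v).card := by
    exact_mod_cast card_inter_le_card_inter_add_card_sdiff _ _ _
  have := h.card_upper i
  have := h.nbr_lower i u hu
  have := h.nbr_lower i v hv
  unfold NodeSimilar
  linarith

lemma IsACD.maxDegree_pos (h : IsACD G ε η Vsp C) {v : V} (hv : v ∈ C i) : 0 < G.maxDegree := by
  have hpos : (0 : ℝ) < (1 + ε) * G.maxDegree :=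
    (Nat.cast_pos.2 (card_pos.2 ⟨v, hv⟩)).trans_le (h.card_upper i)
  exact Nat.pos_of_ne_zero fun h0 => by simp [h0] at hpos

end

theorem stmt9_general (G : SimpleGraph V) [DecidableRel G.Adj] (ε η : ℝ)
    {k : ℕ} (Vsp : Finset V) (C : Fin k → Finset V) (hACD : IsACD G ε η Vsp C)
    (i : Fin k) (v : V) (hv : v ∈ C i) :
    (1 - 3 * ε) * ((C i \ insert v (G.neighborFinset v)).card : ℝ) / 2 ≤ sparsity G v := by
  set A := C i \ insert v (G.neighborFinset v)
  have hΔ : (0 : ℝ) < G.maxDegree := Nat.cast_pos.2 (hACD.maxDegree_pos hv)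
  have hsum : A.card • ((1 - 3 * ε) * G.maxDegree)
      ≤ ∑ u ∈ A, ((G.neighborFinset u ∩ G.neighborFinset v).card : ℝ) :=
    card_nsmul_le_sum _ _ _ fun u hu => hACD.nodeSimilar (mem_sdiff.1 hu).1 hv
  rw [nsmul_eq_mul] at hsum
  calc (1 - 3 * ε) * (A.card : ℝ) / 2
        = A.card * ((1 - 3 * ε) * G.maxDegree) / (2 * G.maxDegree) := by field_simp
    _ ≤ (∑ u ∈ A, ((G.neighborFinset u ∩ G.neighborFinset v).card : ℝ))
          / (2 * G.maxDegree) := by gcongr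
    _ ≤ sparsity G v := G.sum_card_inter_neighborFinset_div_le_sparsity disjoint_sdiff_self_left

/-- If `ε ≤ 1/3` and `v ∈ C i` in an `(ε,η)`-ACD, then
`ζ_v ≥ (1−3ε)·a(v)/2` where `a(v) = |C i ∖ (N(v) ∪ {v})|` is the antidegree of `v`. -/
theorem stmt9 (G : SimpleGraph V) [DecidableRel G.Adj] (ε η : ℝ)
    (hε0 : 0 < ε) (hε : ε ≤ 1 / 3) (hη : η ∈ Set.Ioo (0 : ℝ) 1)
    {k : ℕ} (Vsp : Finset V) (C : Fin k → Finset V) (hACD : IsACD G ε η Vsp C)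
    (i : Fin k) (v : V) (hv : v ∈ C i) :
    (1 - 3 * ε) * ((C i \ insert v (G.neighborFinset v)).card : ℝ) / 2 ≤ sparsity G v :=
  stmt9_general G ε η Vsp C hACD i v hv
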